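/- arXiv:1909.10494 — 6 statements merged into one kernel-verified Lean document; each statement's English description precedes it below -/
import Mathlib

section
/- Let G be a group with presentation ⟨X | R⟩ in which every generator is an involution and every relator has even length. Then for every subset I ⊆ X and every element w ∈ G, there exist a ∈ G^I and b ∈ G_I such that w = ab and l(w) = l(a) + l(b). -/
/-!
Among all factorizations `w = a * b` with `b ∈ G_I` and `l(w) = l(a) + l(b)` (the trivial one
`w = w * 1` is such), take one with `l(a)` minimal. If `l(a x) ≤ l(a)` for some `x ∈ I`, then in
fact `l(a x) = l(a) - 1`, because the relators have even length and so `l` has a well-defined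
parity that every generator flips. Then `w = (a x) (x b)` is again such a factorization, with a
shorter first factor.
-/

/-- The length of an element of a presented group whose generators are involutions:
the least `r` such that `w` is a product of `r` images of generators. -/
noncomputable def genLength {α : Type*} (R : Set (FreeGroup α)) (w : PresentedGroup R) : ℕ :=
  sInf {r : ℕ | ∃ L : List α, L.length = r ∧
    (L.map (PresentedGroup.of : α → PresentedGroup R)).prod = w}

open PresentedGroup

theorem FreeGroup.lift_const_eq_pow_length {α G : Type*} [DecidableEq α] [Group G] {g : G}
    (hg : g ^ 2 = 1) (r : FreeGroup α) : FreeGroup.lift (fun _ => g) r = g ^ r.toWord.length := by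
  have hinv : g⁻¹ = g := inv_eq_of_mul_eq_one_right (by rwa [← sq])
  conv_lhs => rw [← FreeGroup.mk_toWord (x := r)]
  rw [FreeGroup.lift_mk, List.prod_eq_pow_card _ g, List.length_map]
  intro y hy
  obtain ⟨⟨x, b⟩, -, rfl⟩ := List.mem_map.1 hy
  cases b <;> simp [hinv]

section Length

variable {α : Type*} {R : Set (FreeGroup α)}

theorem genLength_le_length {w : PresentedGroup R} (L : List α)
    (h : (L.map (of : α → PresentedGroup R)).prod = w) : genLength R w ≤ L.length :=
  Nat.sInf_le ⟨L, rfl, h⟩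

theorem genLength_one : genLength R 1 = 0 :=
  Nat.eq_zero_of_le_zero (genLength_le_length [] rfl)

theorem genLength_of_le_one (x : α) : genLength R (of x) ≤ 1 :=
  genLength_le_length [x] (by simp)

theorem exists_list_prod_eq (hinv : ∀ x : α, (of x : PresentedGroup R) ^ 2 = 1)
    (w : PresentedGroup R) : ∃ L : List α, (L.map (of : α → PresentedGroup R)).prod = w := by
  obtain ⟨v, rfl⟩ := mk_surjective R w
  induction v using FreeGroup.induction_on with
  | C1 => exact ⟨[], by simp⟩
  | of x => exact ⟨[x], by simp [of]⟩
  | inv_of x _ =>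
    refine ⟨[x], ?_⟩
    have hx : (of x : PresentedGroup R)⁻¹ = of x :=
      inv_eq_of_mul_eq_one_right (by rw [← sq, hinv])
    simpa [of] using hx.symm
  | mul u v hu hv =>
    obtain ⟨Lu, hLu⟩ := hu
    obtain ⟨Lv, hLv⟩ := hv
    exact ⟨Lu ++ Lv, by rw [List.map_append, List.prod_append, hLu, hLv, map_mul]⟩

theorem exists_list_length_eq_genLength (hinv : ∀ x : α, (of x : PresentedGroup R) ^ 2 = 1)
    (w : PresentedGroup R) : ∃ L : List α, L.length = genLength R w ∧
      (L.map (of : α → PresentedGroup R)).prod = w := by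
  obtain ⟨L, hL⟩ := exists_list_prod_eq hinv w
  exact Nat.sInf_mem (s := {r | ∃ L : List α, L.length = r ∧ (L.map of).prod = w})
    ⟨L.length, L, rfl, hL⟩

theorem genLength_mul_le (hinv : ∀ x : α, (of x : PresentedGroup R) ^ 2 = 1)
    (u v : PresentedGroup R) : genLength R (u * v) ≤ genLength R u + genLength R v := by
  obtain ⟨Lu, hLu, hLu'⟩ := exists_list_length_eq_genLength hinv u
  obtain ⟨Lv, hLv, hLv'⟩ := exists_list_length_eq_genLength hinv v
  calc genLength R (u * v) ≤ (Lu ++ Lv).length :=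
        genLength_le_length _ (by rw [List.map_append, List.prod_append, hLu', hLv'])
    _ = genLength R u + genLength R v := by simp [hLu, hLv]

end Length

section Parity

variable {α : Type*} [DecidableEq α] {R : Set (FreeGroup α)}

noncomputable def PresentedGroup.parity (heven : ∀ r ∈ R, Even (FreeGroup.toWord r).length) :
    PresentedGroup R →* Multiplicative (ZMod 2) :=
  toGroup (f := fun _ => Multiplicative.ofAdd 1) fun r hr => by
    obtain ⟨k, hk⟩ := heven r hr
    have h2 : (Multiplicative.ofAdd 1 : Multiplicative (ZMod 2)) ^ 2 = 1 := by decide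
    rw [FreeGroup.lift_const_eq_pow_length h2, hk, ← two_mul, pow_mul, h2, one_pow]

@[simp]
theorem PresentedGroup.parity_of (heven : ∀ r ∈ R, Even (FreeGroup.toWord r).length) (x : α) :
    parity heven (of x) = Multiplicative.ofAdd 1 :=
  toGroup.of _

theorem PresentedGroup.parity_eq_pow_genLength
    (heven : ∀ r ∈ R, Even (FreeGroup.toWord r).length)
    (hinv : ∀ x : α, (of x : PresentedGroup R) ^ 2 = 1) (w : PresentedGroup R) :
    parity heven w = Multiplicative.ofAdd 1 ^ genLength R w := by
  obtain ⟨L, hL, rfl⟩ := exists_list_length_eq_genLength hinv w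
  rw [← hL, map_list_prod, List.map_map, List.prod_eq_pow_card _ (Multiplicative.ofAdd 1),
    List.length_map]
  intro y hy
  obtain ⟨x, -, rfl⟩ := List.mem_map.1 hy
  exact parity_of heven x

theorem genLength_mul_of_ne (heven : ∀ r ∈ R, Even (FreeGroup.toWord r).length)
    (hinv : ∀ x : α, (of x : PresentedGroup R) ^ 2 = 1) (a : PresentedGroup R) (x : α) :
    genLength R (a * of x) ≠ genLength R a := by
  intro h
  have hpar := parity_eq_pow_genLength heven hinv (a * of x)
  rw [map_mul, parity_eq_pow_genLength heven hinv, h, parity_of] at hpar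
  exact absurd (mul_eq_left.mp hpar) (by decide)

end Parity

section Factorization

variable {α : Type*} {R : Set (FreeGroup α)}

theorem mul_of_mul_of_mul (hinv : ∀ x : α, (of x : PresentedGroup R) ^ 2 = 1)
    (a b : PresentedGroup R) (x : α) : a * of x * (of x * b) = a * b := by
  rw [mul_assoc, ← mul_assoc (of x), ← sq, hinv, one_mul]

theorem genLength_mul_eq_add_of_lt (hinv : ∀ x : α, (of x : PresentedGroup R) ^ 2 = 1)
    {a b : PresentedGroup R} {x : α} (hlt : genLength R (a * of x) < genLength R a)
    (hl : genLength R (a * b) = genLength R a + genLength R b) :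
    genLength R (a * b) = genLength R (a * of x) + genLength R (of x * b) := by
  have hab := (mul_of_mul_of_mul hinv a b x).symm
  have ha : genLength R a ≤ genLength R (a * of x) + 1 := by
    calc genLength R a = genLength R (a * of x * of x) := by
          rw [mul_assoc, ← sq, hinv, mul_one]
      _ ≤ genLength R (a * of x) + genLength R (of x) := genLength_mul_le hinv _ _
      _ ≤ genLength R (a * of x) + 1 := by grw [genLength_of_le_one]
  have hb : genLength R (of x * b) ≤ 1 + genLength R b := by
    grw [genLength_mul_le hinv, genLength_of_le_one]
  have hle : genLength R (a * b) ≤ genLength R (a * of x) + genLength R (of x * b) := by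
    rw [hab]; exact genLength_mul_le hinv _ _
  omega

theorem exists_reduced_factorization_of_reduced [DecidableEq α]
    (heven : ∀ r ∈ R, Even (FreeGroup.toWord r).length)
    (hinv : ∀ x : α, (of x : PresentedGroup R) ^ 2 = 1) (I : Set α) (a b : PresentedGroup R)
    (hb : b ∈ Subgroup.closure ((of : α → PresentedGroup R) '' I))
    (hl : genLength R (a * b) = genLength R a + genLength R b) :
    ∃ a' b' : PresentedGroup R, (∀ x ∈ I, genLength R a' < genLength R (a' * of x)) ∧
      b' ∈ Subgroup.closure ((of : α → PresentedGroup R) '' I) ∧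
      a * b = a' * b' ∧ genLength R (a * b) = genLength R a' + genLength R b' := by
  induction hn : genLength R a using Nat.strong_induction_on generalizing a b with
  | _ n ih =>
  by_cases hmin : ∀ x ∈ I, genLength R a < genLength R (a * of x)
  · exact ⟨a, b, hmin, hb, rfl, hl⟩
  push Not at hmin
  obtain ⟨x, hx, hle⟩ := hmin
  have hlt := lt_of_le_of_ne hle (genLength_mul_of_ne heven hinv a x)
  have hab := (mul_of_mul_of_mul hinv a b x).symm
  have hl' := genLength_mul_eq_add_of_lt hinv hlt hl
  rw [hab] at hl' ⊢
  exact ih _ (hn ▸ hlt) _ _ (Subgroup.mul_mem _ (Subgroup.subset_closure ⟨x, hx, rfl⟩) hb) hl' rfl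

end Factorization

theorem stmt_0 {α : Type*} [DecidableEq α] (R : Set (FreeGroup α))
    (hinv : ∀ x : α, (PresentedGroup.of x : PresentedGroup R) ^ 2 = 1)
    (heven : ∀ r ∈ R, Even (FreeGroup.toWord r).length)
    (I : Set α) (w : PresentedGroup R) :
    ∃ a b : PresentedGroup R,
      (∀ x ∈ I, genLength R a < genLength R (a * PresentedGroup.of x)) ∧
      b ∈ Subgroup.closure ((fun x : α => (PresentedGroup.of x : PresentedGroup R)) '' I) ∧
      w = a * b ∧ genLength R w = genLength R a + genLength R b := by
  obtain ⟨a, b, ha, hb, hw, hl⟩ := exists_reduced_factorization_of_reduced heven hinv I w 1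
    (one_mem _) (by simp [genLength_one])
  exact ⟨a, b, ha, hb, by simpa using hw, by simpa using hl⟩
end

section
/- Let G be a group with presentation ⟨X | R⟩ in which every generator is an involution and every relator has even length. Let x ∈ X and set I = X ∖ {x}. For every w ∈ G with w ≠ e, one has w ∈ ᴵG if and only if every reduced expression of w begins with the generator x (i.e. every expression of w as a product of l(w) generators has first factor x). -/
theorem FreeGroup.lift_const_of_inv_eq {α β : Type*} [DecidableEq α] [Group β] {g : β}
    (hg : g⁻¹ = g) (r : FreeGroup α) : FreeGroup.lift (fun _ => g) r = g ^ r.toWord.length := by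
  conv_lhs => rw [← FreeGroup.mk_toWord (x := r)]
  simp [FreeGroup.lift_mk, hg]

namespace PresentedGroup

variable {α : Type*} {R : Set (FreeGroup α)}

theorem of_mul_of_mul (hinv : ∀ x : α, (of x : PresentedGroup R) ^ 2 = 1) (y : α)
    (w : PresentedGroup R) : of y * (of y * w) = w := by
  rw [← mul_assoc, ← sq, hinv, one_mul]

theorem exists_list_map_of_prod_eq (hinv : ∀ x : α, (of x : PresentedGroup R) ^ 2 = 1)
    (w : PresentedGroup R) : ∃ L : List α, (L.map of).prod = w := by
  have hw : w ∈ Subgroup.closure (Set.range (of : α → PresentedGroup R)) := by simp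
  induction hw using Subgroup.closure_induction with
  | mem _ h => obtain ⟨a, rfl⟩ := h; exact ⟨[a], by simp⟩
  | one => exact ⟨[], rfl⟩
  | mul _ _ _ _ hu hv =>
    obtain ⟨L, rfl⟩ := hu
    obtain ⟨M, rfl⟩ := hv
    exact ⟨L ++ M, by simp⟩
  | inv _ _ hu =>
    obtain ⟨L, rfl⟩ := hu
    have hof : ∀ a : α, (of a : PresentedGroup R)⁻¹ = of a :=
      fun a => inv_eq_of_mul_eq_one_right (by rw [← sq, hinv])
    exact ⟨L.reverse, by simp [List.prod_inv_reverse, Function.comp_def, hof]⟩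

theorem genLength_le {w : PresentedGroup R} {L : List α} (h : (L.map of).prod = w) :
    genLength R w ≤ L.length :=
  Nat.sInf_le ⟨L, rfl, h⟩

theorem exists_length_eq_genLength (hinv : ∀ x : α, (of x : PresentedGroup R) ^ 2 = 1)
    (w : PresentedGroup R) : ∃ L : List α, L.length = genLength R w ∧ (L.map of).prod = w := by
  obtain ⟨L, hL⟩ := exists_list_map_of_prod_eq hinv w
  exact Nat.sInf_mem (s := {r | ∃ L : List α, L.length = r ∧ (L.map of).prod = w})
    ⟨L.length, L, rfl, hL⟩

theorem genLength_of_mul_lt_iff (hinv : ∀ x : α, (of x : PresentedGroup R) ^ 2 = 1) (y : α)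
    (w : PresentedGroup R) : genLength R (of y * w) < genLength R w ↔
      ∃ L : List α, L.length = genLength R w ∧ (L.map of).prod = w ∧ L.head? = some y := by
  constructor
  · intro hlt
    obtain ⟨M, hM, hMprod⟩ := exists_length_eq_genLength hinv (of y * w)
    have hyM : ((y :: M).map of).prod = w := by
      rw [List.map_cons, List.prod_cons, hMprod, of_mul_of_mul hinv]
    have := genLength_le hyM
    exact ⟨y :: M, by simp only [List.length_cons] at this ⊢; omega, hyM, rfl⟩
  · rintro ⟨L, hL, rfl, hhead⟩
    obtain ⟨L', rfl⟩ := List.head?_eq_some_iff.1 hhead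
    have hL' : ((L'.map of).prod : PresentedGroup R) = of y * ((y :: L').map of).prod := by
      rw [List.map_cons, List.prod_cons, of_mul_of_mul hinv]
    have := genLength_le hL'
    simp only [List.length_cons] at hL
    omega

section LengthSign

variable [DecidableEq α] (heven : ∀ r ∈ R, Even (FreeGroup.toWord r).length)

noncomputable def lengthSign : PresentedGroup R →* ℤˣ :=
  toGroup (f := fun _ => -1) fun r hr => by
    rw [FreeGroup.lift_const_of_inv_eq (by simp), (heven r hr).neg_one_pow]

@[simp]
theorem lengthSign_of (a : α) : lengthSign heven (of a) = -1 :=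
  toGroup.of _

theorem lengthSign_list_prod (L : List α) :
    lengthSign heven (L.map of).prod = (-1) ^ L.length := by
  induction L with
  | nil => simp
  | cons a L ih => simp [ih, pow_succ']

end LengthSign

theorem genLength_of_mul_ne [DecidableEq α] (heven : ∀ r ∈ R, Even (FreeGroup.toWord r).length)
    (hinv : ∀ x : α, (of x : PresentedGroup R) ^ 2 = 1) (y : α) (w : PresentedGroup R) :
    genLength R (of y * w) ≠ genLength R w := by
  intro h
  obtain ⟨L, hL, rfl⟩ := exists_length_eq_genLength hinv w
  obtain ⟨M, hM, hMprod⟩ := exists_length_eq_genLength hinv (of y * (L.map of).prod)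
  have hyM : ((y :: M).map (of : α → PresentedGroup R)).prod = (L.map of).prod := by
    rw [List.map_cons, List.prod_cons, hMprod, of_mul_of_mul hinv]
  have hsign := congrArg (lengthSign heven) hyM
  rw [lengthSign_list_prod, lengthSign_list_prod, List.length_cons, pow_succ, hM, h, ← hL,
    mul_eq_left] at hsign
  exact absurd hsign (by decide)

end PresentedGroup

theorem stmt_3 {α : Type*} [DecidableEq α] (R : Set (FreeGroup α))
    (hinv : ∀ x : α, (PresentedGroup.of x : PresentedGroup R) ^ 2 = 1)
    (heven : ∀ r ∈ R, Even (FreeGroup.toWord r).length)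
    (x : α) (w : PresentedGroup R) (hw : w ≠ 1) :
    (∀ y ∈ (Set.univ \ {x} : Set α),
        genLength R w < genLength R (PresentedGroup.of y * w)) ↔
      ∀ L : List α, L.length = genLength R w →
        (L.map (PresentedGroup.of : α → PresentedGroup R)).prod = w →
        L.head? = some x := by
  constructor
  · rintro h (_ | ⟨y, L⟩) hlen hprod
    · exact absurd hprod.symm hw
    by_contra hyx
    have hlt := (PresentedGroup.genLength_of_mul_lt_iff hinv y w).2 ⟨y :: L, hlen, hprod, rfl⟩
    exact lt_asymm hlt (h y ⟨trivial, fun hy => hyx (congrArg some hy)⟩)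
  · intro h y hy
    refine (PresentedGroup.genLength_of_mul_ne heven hinv y w).lt_or_gt.resolve_left
      fun hlt => hy.2 ?_
    obtain ⟨L, hlen, hprod, hhead⟩ := (PresentedGroup.genLength_of_mul_lt_iff hinv y w).1 hlt
    exact Option.some_injective _ (hhead.symm.trans (h L hlen hprod))
end

section
/- Let G be a group with presentation ⟨X | R⟩ in which every generator is an involution and every relator has even length. If I = X, or I = {x} is a singleton subset of X, then for every w ∈ G the set wG_I ∩ G^I contains exactly one element, and consequently the factorisation of w with respect to G_I is unique: if w = ab = a′b′ with a, a′ ∈ G^I and b, b′ ∈ G_I, then a = a′ and b = b′. -/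
/-!
Since every relator has even length, sending each generator to `-1` defines a character
`PresentedGroup R →* ℤˣ`, and it maps `w` to `(-1) ^ l(w)`. Hence `l(w x) ≠ l(w)` for every
generator `x`, while `l(w x x) = l(w)` because `x` is an involution. For `I = {x}` exactly one of
`w`, `w x` is therefore shorter than its right multiple by `x`. For `I = X`, an element with
`l(a) < l(a x)` for all `x` must be `1`, since the last letter of a shortest expression of `a ≠ 1`
shortens it. Uniqueness of the factorisation follows from uniqueness in the coset.
-/

theorem Subgroup.eq_and_eq_of_existsUnique_mem_leftCoset {G : Type*} [Group G] (H : Subgroup G)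
    (P : G → Prop) (w : G) (h : ∃! a, (∃ b ∈ H, a = w * b) ∧ P a) (a a' b b' : G)
    (ha : P a) (ha' : P a') (hb : b ∈ H) (hb' : b' ∈ H) (hw : w = a * b) (hw' : w = a' * b') :
    a = a' ∧ b = b' := by
  have hmem : ∀ a b, b ∈ H → w = a * b → ∃ c ∈ H, a = w * c := fun a b hb hw =>
    ⟨b⁻¹, inv_mem hb, by rw [hw, mul_inv_cancel_right]⟩
  have haa' : a = a' := h.unique ⟨hmem a b hb hw, ha⟩ ⟨hmem a' b' hb' hw', ha'⟩
  subst haa'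
  exact ⟨rfl, mul_left_cancel (hw.symm.trans hw')⟩

namespace PresentedGroup

variable {α : Type*} {R : Set (FreeGroup α)}

section Sign

variable [DecidableEq α] (heven : ∀ r ∈ R, Even (FreeGroup.toWord r).length)

noncomputable def sign : PresentedGroup R →* ℤˣ :=
  toGroup (f := fun _ => -1) fun r hr => by
    rw [← FreeGroup.mk_toWord (x := r), FreeGroup.lift_mk]
    simpa using (heven r hr).neg_one_pow

theorem sign_of (x : α) : sign heven (of x) = -1 :=
  toGroup.of _

theorem sign_list_prod (L : List α) : sign heven (L.map of).prod = (-1) ^ L.length := by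
  simp [map_list_prod, Function.comp_def, sign_of]

end Sign

theorem genLength_le_length {w : PresentedGroup R} (L : List α) (h : (L.map of).prod = w) :
    genLength R w ≤ L.length :=
  Nat.sInf_le ⟨L, rfl, h⟩

theorem genLength_one : genLength R (1 : PresentedGroup R) = 0 :=
  Nat.le_zero.mp (genLength_le_length [] rfl)

variable (hinv : ∀ x : α, (of x : PresentedGroup R) ^ 2 = 1)
include hinv

theorem mul_of_mul_of (w : PresentedGroup R) (x : α) : w * of x * of x = w := by
  rw [mul_assoc, ← pow_two, hinv, mul_one]

theorem of_inv (x : α) : (of x : PresentedGroup R)⁻¹ = of x :=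
  inv_eq_of_mul_eq_one_right (by rw [← pow_two, hinv])

theorem exists_list_prod_eq (w : PresentedGroup R) : ∃ L : List α, (L.map of).prod = w := by
  induction w using PresentedGroup.induction_on with
  | _ z =>
  induction z using FreeGroup.induction_on with
  | C1 => exact ⟨[], rfl⟩
  | of x => exact ⟨[x], List.prod_singleton⟩
  | inv_of x _ =>
    refine ⟨[x], ?_⟩
    rw [map_inv, ← of, of_inv hinv]
    exact List.prod_singleton
  | mul y z hy hz =>
    obtain ⟨L₁, h₁⟩ := hy
    obtain ⟨L₂, h₂⟩ := hz
    exact ⟨L₁ ++ L₂, by rw [List.map_append, List.prod_append, h₁, h₂, map_mul]⟩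

theorem exists_list_length_eq_genLength (w : PresentedGroup R) :
    ∃ L : List α, L.length = genLength R w ∧ (L.map of).prod = w := by
  obtain ⟨L, hL⟩ := exists_list_prod_eq hinv w
  exact Nat.sInf_mem (s := {r | ∃ L : List α, L.length = r ∧ (L.map of).prod = w})
    ⟨L.length, L, rfl, hL⟩

theorem eq_one_of_forall_genLength_lt {a : PresentedGroup R}
    (h : ∀ x : α, genLength R a < genLength R (a * of x)) : a = 1 := by
  obtain ⟨L, hL, hprod⟩ := exists_list_length_eq_genLength hinv a
  rcases L.eq_nil_or_concat' with rfl | ⟨L', y, rfl⟩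
  · exact hprod.symm
  · have hdrop : (L'.map of).prod = a * of y := by
      rw [← hprod, List.map_append, List.prod_append, List.map_singleton, List.prod_singleton,
        mul_of_mul_of hinv]
    have := genLength_le_length L' hdrop
    have := h y
    simp only [List.length_append, List.length_singleton] at hL
    omega

theorem mem_closure_of_singleton {b : PresentedGroup R} {x : α}
    (hb : b ∈ Subgroup.closure {of x}) : b = 1 ∨ b = of x := by
  obtain ⟨n, rfl⟩ := Subgroup.mem_closure_singleton.mp hb
  rw [zpow_eq_zpow_emod' n (hinv x)]
  rcases Int.emod_two_eq n with h | h <;> simp [h]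

theorem exists_mem_closure_of_singleton_iff {a w : PresentedGroup R} {x : α} :
    (∃ b ∈ Subgroup.closure {of x}, a = w * b) ↔ a = w ∨ a = w * of x := by
  constructor
  · rintro ⟨b, hb, rfl⟩
    rcases mem_closure_of_singleton hinv hb with rfl | rfl <;> simp
  · rintro (rfl | rfl)
    · exact ⟨1, one_mem _, (mul_one a).symm⟩
    · exact ⟨of x, Subgroup.subset_closure rfl, rfl⟩

section Sign

variable [DecidableEq α] (heven : ∀ r ∈ R, Even (FreeGroup.toWord r).length)
include heven

theorem sign_eq_neg_one_pow_genLength (w : PresentedGroup R) :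
    sign heven w = (-1) ^ genLength R w := by
  obtain ⟨L, hL, rfl⟩ := exists_list_length_eq_genLength hinv w
  rw [sign_list_prod, hL]

theorem genLength_mul_of_ne (w : PresentedGroup R) (x : α) :
    genLength R (w * of x) ≠ genLength R w := by
  intro h
  have hsign := map_mul (sign heven) w (of x)
  rw [sign_of, sign_eq_neg_one_pow_genLength hinv, sign_eq_neg_one_pow_genLength hinv, h,
    mul_neg_one] at hsign
  exact units_ne_neg_self _ hsign

theorem forall_genLength_lt_iff_eq_one (a : PresentedGroup R) :
    (∀ x : α, genLength R a < genLength R (a * of x)) ↔ a = 1 := by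
  refine ⟨eq_one_of_forall_genLength_lt hinv, ?_⟩
  rintro rfl x
  have := genLength_mul_of_ne hinv heven 1 x
  rw [genLength_one] at this ⊢
  omega

theorem existsUnique_genLength_lt_mul_of (w : PresentedGroup R) (x : α) :
    ∃! a, (a = w ∨ a = w * of x) ∧ genLength R a < genLength R (a * of x) := by
  have hw := genLength_mul_of_ne hinv heven w x
  have hwx := mul_of_mul_of hinv w x
  rcases Nat.lt_or_gt_of_ne hw with hlt | hgt
  · refine ⟨w * of x, ⟨Or.inr rfl, by rwa [hwx]⟩, ?_⟩
    rintro a ⟨rfl | rfl, ha⟩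
    · omega
    · rfl
  · refine ⟨w, ⟨Or.inl rfl, hgt⟩, ?_⟩
    rintro a ⟨rfl | rfl, ha⟩
    · rfl
    · rw [hwx] at ha
      omega

end Sign

end PresentedGroup

open PresentedGroup in
theorem stmt_10 {α : Type*} [DecidableEq α] (R : Set (FreeGroup α))
    (hinv : ∀ x : α, (PresentedGroup.of x : PresentedGroup R) ^ 2 = 1)
    (heven : ∀ r ∈ R, Even (FreeGroup.toWord r).length)
    (I : Set α) (hI : I = Set.univ ∨ ∃ x : α, I = {x}) (w : PresentedGroup R) :
    (∃! a : PresentedGroup R,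
        (∃ b ∈ Subgroup.closure ((fun x : α => (PresentedGroup.of x : PresentedGroup R)) '' I),
            a = w * b) ∧
        ∀ x ∈ I, genLength R a < genLength R (a * PresentedGroup.of x)) ∧
      ∀ a a' b b' : PresentedGroup R,
        (∀ x ∈ I, genLength R a < genLength R (a * PresentedGroup.of x)) →
        (∀ x ∈ I, genLength R a' < genLength R (a' * PresentedGroup.of x)) →
        b ∈ Subgroup.closure ((fun x : α => (PresentedGroup.of x : PresentedGroup R)) '' I) →
        b' ∈ Subgroup.closure ((fun x : α => (PresentedGroup.of x : PresentedGroup R)) '' I) →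
        w = a * b → w = a' * b' → a = a' ∧ b = b' := by
  have hcoset : ∃! a : PresentedGroup R,
      (∃ b ∈ Subgroup.closure ((fun x : α => (of x : PresentedGroup R)) '' I), a = w * b) ∧
        ∀ x ∈ I, genLength R a < genLength R (a * of x) := by
    rcases hI with rfl | ⟨x, rfl⟩
    · have hG : Subgroup.closure ((fun x : α => (of x : PresentedGroup R)) '' .univ) = ⊤ := by
        rw [Set.image_univ, closure_range_of]
      simp only [hG, Subgroup.mem_top, true_and, Set.mem_univ, forall_const,
        forall_genLength_lt_iff_eq_one hinv heven]
      exact ⟨1, ⟨⟨w⁻¹, (mul_inv_cancel w).symm⟩, rfl⟩, fun _ h => h.2⟩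
    · simpa only [Set.image_singleton, exists_mem_closure_of_singleton_iff hinv,
        Set.mem_singleton_iff, forall_eq] using existsUnique_genLength_lt_mul_of hinv heven w x
  exact ⟨hcoset, Subgroup.eq_and_eq_of_existsUnique_mem_leftCoset _ _ w hcoset⟩
end

section
/- Let G be the cluster group with presentation on generators t₁, t₂, t₃ subject to the relations t₁² = t₂² = t₃² = e, the braid relations t₁t₂t₁ = t₂t₁t₂, t₁t₃t₁ = t₃t₁t₃, t₂t₃t₂ = t₃t₂t₃, and the cycle relations t₁t₂t₃t₁ = t₂t₃t₁t₂ and t₂t₃t₁t₂ = t₃t₁t₂t₃. Then the assignment t₁ ↦ (1 2), t₂ ↦ (2 3), t₃ ↦ (2 4) extends to a group isomorphism π : G → Σ₄, where Σ₄ is the symmetric group on 4 letters and (i j) denotes a transposition. -/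
/-- The relators of the cluster group presentation associated to the quiver of
mutation-Dynkin type A₃: the generators `t₁, t₂, t₃` (indexed by `0, 1, 2 : Fin 3`) are
involutions, they satisfy the braid relations and the cycle relations. -/
def clusterRels : Set (FreeGroup (Fin 3)) :=
  { FreeGroup.of 0 ^ 2, FreeGroup.of 1 ^ 2, FreeGroup.of 2 ^ 2,
    (FreeGroup.of 0 * FreeGroup.of 1 * FreeGroup.of 0) *
      (FreeGroup.of 1 * FreeGroup.of 0 * FreeGroup.of 1)⁻¹,
    (FreeGroup.of 0 * FreeGroup.of 2 * FreeGroup.of 0) *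
      (FreeGroup.of 2 * FreeGroup.of 0 * FreeGroup.of 2)⁻¹,
    (FreeGroup.of 1 * FreeGroup.of 2 * FreeGroup.of 1) *
      (FreeGroup.of 2 * FreeGroup.of 1 * FreeGroup.of 2)⁻¹,
    (FreeGroup.of 0 * FreeGroup.of 1 * FreeGroup.of 2 * FreeGroup.of 0) *
      (FreeGroup.of 1 * FreeGroup.of 2 * FreeGroup.of 0 * FreeGroup.of 1)⁻¹,
    (FreeGroup.of 1 * FreeGroup.of 2 * FreeGroup.of 0 * FreeGroup.of 1) *
      (FreeGroup.of 2 * FreeGroup.of 0 * FreeGroup.of 1 * FreeGroup.of 2)⁻¹ }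

/-- The cluster group of mutation-Dynkin type A₃. -/
abbrev ClusterGroupA3 : Type := PresentedGroup clusterRels

/-- `t i` is the image in the cluster group of the generator `tᵢ₊₁`. -/
def t (i : Fin 3) : ClusterGroupA3 := PresentedGroup.of i

namespace ClusterAux

def a : ClusterGroupA3 := PresentedGroup.of 0
def b : ClusterGroupA3 := PresentedGroup.of 1
def c : ClusterGroupA3 := PresentedGroup.of 2

lemma rel_of_mem {r : FreeGroup (Fin 3)} (h : r ∈ clusterRels) :
    PresentedGroup.mk clusterRels r = 1 :=
  (QuotientGroup.eq_one_iff _).mpr (Subgroup.subset_normalClosure h)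

lemma q1_l : a * a = 1 := by
  have h := rel_of_mem (r := FreeGroup.of 0 ^ 2) (by simp [clusterRels])
  rw [map_pow, pow_two] at h; exact h

lemma q2_l : b * b = 1 := by
  have h := rel_of_mem (r := FreeGroup.of 1 ^ 2) (by simp [clusterRels])
  rw [map_pow, pow_two] at h; exact h

lemma q3_l : c * c = 1 := by
  have h := rel_of_mem (r := FreeGroup.of 2 ^ 2) (by simp [clusterRels])
  rw [map_pow, pow_two] at h; exact h

lemma rel_ba : a * b * a = b * a * b := by
  have h := rel_of_mem (r := (FreeGroup.of 0 * FreeGroup.of 1 * FreeGroup.of 0) *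
      (FreeGroup.of 1 * FreeGroup.of 0 * FreeGroup.of 1)⁻¹) (by simp [clusterRels])
  simp only [map_mul, map_inv] at h
  exact mul_inv_eq_one.mp h

lemma rel_ca : a * c * a = c * a * c := by
  have h := rel_of_mem (r := (FreeGroup.of 0 * FreeGroup.of 2 * FreeGroup.of 0) *
      (FreeGroup.of 2 * FreeGroup.of 0 * FreeGroup.of 2)⁻¹) (by simp [clusterRels])
  simp only [map_mul, map_inv] at h
  exact mul_inv_eq_one.mp h

lemma rel_cb : b * c * b = c * b * c := by
  have h := rel_of_mem (r := (FreeGroup.of 1 * FreeGroup.of 2 * FreeGroup.of 1) *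
      (FreeGroup.of 2 * FreeGroup.of 1 * FreeGroup.of 2)⁻¹) (by simp [clusterRels])
  simp only [map_mul, map_inv] at h
  exact mul_inv_eq_one.mp h

lemma rel_c1 : a * b * c * a = b * c * a * b := by
  have h := rel_of_mem (r := (FreeGroup.of 0 * FreeGroup.of 1 * FreeGroup.of 2 * FreeGroup.of 0) *
      (FreeGroup.of 1 * FreeGroup.of 2 * FreeGroup.of 0 * FreeGroup.of 1)⁻¹) (by simp [clusterRels])
  simp only [map_mul, map_inv] at h
  exact mul_inv_eq_one.mp h

lemma rel_c2 : b * c * a * b = c * a * b * c := by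
  have h := rel_of_mem (r := (FreeGroup.of 1 * FreeGroup.of 2 * FreeGroup.of 0 * FreeGroup.of 1) *
      (FreeGroup.of 2 * FreeGroup.of 0 * FreeGroup.of 1 * FreeGroup.of 2)⁻¹) (by simp [clusterRels])
  simp only [map_mul, map_inv] at h
  exact mul_inv_eq_one.mp h

lemma q4_l : b * a * b = a * b * a := rel_ba.symm
lemma q5_l : c * a * c = a * c * a := rel_ca.symm
lemma q6_l : c * b * c = b * c * b := rel_cb.symm
lemma q7_l : b * c * a * b = a * b * c * a := rel_c1.symm
lemma q8_l : c * a * b * c = a * b * c * a := rel_c2.symm.trans rel_c1.symm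

lemma q1_x (x : ClusterGroupA3) : a * (a * (x)) = x := by
  rw [← mul_assoc, q1_l, one_mul]

lemma q2_x (x : ClusterGroupA3) : b * (b * (x)) = x := by
  rw [← mul_assoc, q2_l, one_mul]

lemma q3_x (x : ClusterGroupA3) : c * (c * (x)) = x := by
  rw [← mul_assoc, q3_l, one_mul]

lemma q4_t : b * (a * (b)) = a * (b * (a)) := by
  simp only [← mul_assoc]; exact q4_l

lemma q4_x (x : ClusterGroupA3) : b * (a * (b * (x))) = a * (b * (a * (x))) := by
  simp only [← mul_assoc]; rw [q4_l]

lemma q5_t : c * (a * (c)) = a * (c * (a)) := by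
  simp only [← mul_assoc]; exact q5_l

lemma q5_x (x : ClusterGroupA3) : c * (a * (c * (x))) = a * (c * (a * (x))) := by
  simp only [← mul_assoc]; rw [q5_l]

lemma q6_t : c * (b * (c)) = b * (c * (b)) := by
  simp only [← mul_assoc]; exact q6_l

lemma q6_x (x : ClusterGroupA3) : c * (b * (c * (x))) = b * (c * (b * (x))) := by
  simp only [← mul_assoc]; rw [q6_l]

lemma q7_t : b * (c * (a * (b))) = a * (b * (c * (a))) := by
  simp only [← mul_assoc]; exact q7_l

lemma q7_x (x : ClusterGroupA3) : b * (c * (a * (b * (x)))) = a * (b * (c * (a * (x)))) := by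
  simp only [← mul_assoc]; rw [q7_l]

lemma q8_t : c * (a * (b * (c))) = a * (b * (c * (a))) := by
  simp only [← mul_assoc]; exact q8_l

lemma q8_x (x : ClusterGroupA3) : c * (a * (b * (c * (x)))) = a * (b * (c * (a * (x)))) := by
  simp only [← mul_assoc]; rw [q8_l]

lemma q9_l : b * a * c * a = a * c * a * b := by
  calc b * a * c * a = b * (a * (c * a)) := by group
    _ = b * (a * (b * (b * (c * a)))) := by rw [q2_x]
    _ = a * (b * (a * (b * (c * a)))) := by rw [q4_x]
    _ = a * (b * (b * (c * (a * b)))) := by rw [q7_t]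
    _ = a * (c * (a * b)) := by rw [q2_x]
    _ = a * c * a * b := by group

lemma q9_t : b * (a * (c * a)) = a * (c * (a * b)) := by
  simp only [← mul_assoc]; exact q9_l

lemma q9_x (x : ClusterGroupA3) : b * (a * (c * (a * x))) = a * (c * (a * (b * x))) := by
  simp only [← mul_assoc]; rw [q9_l]

lemma q10_l : b * a * c * b = a * c * b * a := by
  calc b * a * c * b = b * (a * (c * b)) := by group
    _ = b * (a * (c * (a * (a * b)))) := by rw [q1_x]
    _ = a * (c * (a * (b * (a * b)))) := by rw [q9_x]
    _ = a * (c * (a * (a * (b * a)))) := by rw [q4_t]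
    _ = a * (c * (b * a)) := by rw [q1_x]
    _ = a * c * b * a := by group

lemma q10_t : b * (a * (c * b)) = a * (c * (b * a)) := by
  simp only [← mul_assoc]; exact q10_l

lemma q10_x (x : ClusterGroupA3) : b * (a * (c * (b * x))) = a * (c * (b * (a * x))) := by
  simp only [← mul_assoc]; rw [q10_l]

lemma q11_l : b * c * b * a = a * b * c * b := by
  calc b * c * b * a = b * (c * (b * a)) := by group
    _ = b * (c * (a * (a * (b * a)))) := by rw [q1_x]
    _ = b * (c * (a * (b * (a * b)))) := by rw [q4_t]
    _ = a * (b * (c * (a * (a * b)))) := by rw [q7_x]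
    _ = a * (b * (c * b)) := by rw [q1_x]
    _ = a * b * c * b := by group

lemma q11_t : b * (c * (b * a)) = a * (b * (c * b)) := by
  simp only [← mul_assoc]; exact q11_l

lemma q11_x (x : ClusterGroupA3) : b * (c * (b * (a * x))) = a * (b * (c * (b * x))) := by
  simp only [← mul_assoc]; rw [q11_l]

lemma q12_l : c * a * b * a = a * b * a * c := by
  calc c * a * b * a = c * (a * (b * a)) := by group
    _ = c * (a * (b * (c * (c * a)))) := by rw [q3_x]
    _ = a * (b * (c * (a * (c * a)))) := by rw [q8_x]
    _ = a * (b * (a * (c * (a * a)))) := by rw [q5_x]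
    _ = a * (b * (a * c)) := by rw [q1_l, mul_one]
    _ = a * b * a * c := by group

lemma q12_t : c * (a * (b * a)) = a * (b * (a * c)) := by
  simp only [← mul_assoc]; exact q12_l

lemma q12_x (x : ClusterGroupA3) : c * (a * (b * (a * x))) = a * (b * (a * (c * x))) := by
  simp only [← mul_assoc]; rw [q12_l]

lemma q13_l : c * b * a * c = a * c * b * a := by
  calc c * b * a * c = c * (b * (a * c)) := by group
    _ = c * (b * (c * (c * (a * c)))) := by rw [q3_x]
    _ = b * (c * (b * (c * (a * c)))) := by rw [q6_x]
    _ = b * (c * (b * (a * (c * a)))) := by rw [q5_t]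
    _ = b * (c * (a * (c * (a * b)))) := by rw [q9_t]
    _ = b * (a * (c * (a * (a * b)))) := by rw [q5_x]
    _ = b * (a * (c * b)) := by rw [q1_x]
    _ = b * a * c * b := by group
    _ = a * c * b * a := q10_l

lemma q13_t : c * (b * (a * c)) = a * (c * (b * a)) := by
  simp only [← mul_assoc]; exact q13_l

lemma q13_x (x : ClusterGroupA3) : c * (b * (a * (c * x))) = a * (c * (b * (a * x))) := by
  simp only [← mul_assoc]; rw [q13_l]

def InL (g : ClusterGroupA3) : Prop :=
  g = 1 ∨ g = a ∨ g = b ∨ g = c ∨ g = a*b ∨ g = a*c ∨ g = b*a ∨ g = b*c ∨ g = c*a ∨ g = c*b ∨ g = a*b*a ∨ g = a*b*c ∨ g = a*c*a ∨ g = a*c*b ∨ g = b*a*c ∨ g = b*c*a ∨ g = b*c*b ∨ g = c*a*b ∨ g = c*b*a ∨ g = a*b*a*c ∨ g = a*b*c*a ∨ g = a*b*c*b ∨ g = a*c*a*b ∨ g = a*c*b*a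

lemma one_InL : InL 1 := Or.inl rfl

lemma stepa : ∀ g : ClusterGroupA3, InL g → InL (a * g) := by
  intro g hg
  unfold InL at hg ⊢
  rcases hg with rfl|rfl|rfl|rfl|rfl|rfl|rfl|rfl|rfl|rfl|rfl|rfl|rfl|rfl|rfl|rfl|rfl|rfl|rfl|rfl|rfl|rfl|rfl|rfl <;>
    simp only [mul_assoc, one_mul, mul_one, q1_l, q1_x, q2_l, q2_x, q3_l, q3_x, q4_t, q4_x, q5_t, q5_x, q6_t, q6_x, q7_t, q7_x, q8_t, q8_x, q9_t, q9_x, q10_t, q10_x, q11_t, q11_x, q12_t, q12_x, q13_t, q13_x, eq_self_iff_true, true_or, or_true, one_ne_zero]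

lemma stepb : ∀ g : ClusterGroupA3, InL g → InL (b * g) := by
  intro g hg
  unfold InL at hg ⊢
  rcases hg with rfl|rfl|rfl|rfl|rfl|rfl|rfl|rfl|rfl|rfl|rfl|rfl|rfl|rfl|rfl|rfl|rfl|rfl|rfl|rfl|rfl|rfl|rfl|rfl <;>
    simp only [mul_assoc, one_mul, mul_one, q1_l, q1_x, q2_l, q2_x, q3_l, q3_x, q4_t, q4_x, q5_t, q5_x, q6_t, q6_x, q7_t, q7_x, q8_t, q8_x, q9_t, q9_x, q10_t, q10_x, q11_t, q11_x, q12_t, q12_x, q13_t, q13_x, eq_self_iff_true, true_or, or_true, one_ne_zero]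

lemma stepc : ∀ g : ClusterGroupA3, InL g → InL (c * g) := by
  intro g hg
  unfold InL at hg ⊢
  rcases hg with rfl|rfl|rfl|rfl|rfl|rfl|rfl|rfl|rfl|rfl|rfl|rfl|rfl|rfl|rfl|rfl|rfl|rfl|rfl|rfl|rfl|rfl|rfl|rfl <;>
    simp only [mul_assoc, one_mul, mul_one, q1_l, q1_x, q2_l, q2_x, q3_l, q3_x, q4_t, q4_x, q5_t, q5_x, q6_t, q6_x, q7_t, q7_x, q8_t, q8_x, q9_t, q9_x, q10_t, q10_x, q11_t, q11_x, q12_t, q12_x, q13_t, q13_x, eq_self_iff_true, true_or, or_true, one_ne_zero]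

lemma ainv : a⁻¹ = a := inv_eq_of_mul_eq_one_right q1_l
lemma binv : b⁻¹ = b := inv_eq_of_mul_eq_one_right q2_l
lemma cinv : c⁻¹ = c := inv_eq_of_mul_eq_one_right q3_l

lemma stepa' : ∀ g : ClusterGroupA3, InL g → InL (a⁻¹ * g) := by
  intro g hg; rw [ainv]; exact stepa g hg
lemma stepb' : ∀ g : ClusterGroupA3, InL g → InL (b⁻¹ * g) := by
  intro g hg; rw [binv]; exact stepb g hg
lemma stepc' : ∀ g : ClusterGroupA3, InL g → InL (c⁻¹ * g) := by
  intro g hg; rw [cinv]; exact stepc g hg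

lemma key (g : ClusterGroupA3) : InL g := by
  have h : g ∈ Subgroup.closure (Set.range (PresentedGroup.of : Fin 3 → ClusterGroupA3)) := by
    rw [PresentedGroup.closure_range_of]; exact Subgroup.mem_top g
  refine Subgroup.closure_induction_left one_InL ?_ ?_ h
  · rintro x ⟨i, rfl⟩ y _ hy
    fin_cases i
    · exact stepa y hy
    · exact stepb y hy
    · exact stepc y hy
  · rintro x ⟨i, rfl⟩ y _ hy
    fin_cases i
    · exact stepa' y hy
    · exact stepb' y hy
    · exact stepc' y hy

def f : Fin 3 → Equiv.Perm (Fin 4)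
  | ⟨0, _⟩ => Equiv.swap 0 1
  | ⟨1, _⟩ => Equiv.swap 1 2
  | ⟨2, _⟩ => Equiv.swap 1 3

lemma hf : ∀ r ∈ clusterRels, FreeGroup.lift f r = 1 := by
  intro r hr
  simp only [clusterRels, Set.mem_insert_iff, Set.mem_singleton_iff] at hr
  rcases hr with rfl | rfl | rfl | rfl | rfl | rfl | rfl | rfl <;>
    · simp only [map_mul, map_inv, map_pow, FreeGroup.lift_apply_of]
      decide

noncomputable def phi : ClusterGroupA3 →* Equiv.Perm (Fin 4) := PresentedGroup.toGroup hf

lemma phia : phi a = Equiv.swap 0 1 := PresentedGroup.toGroup.of hf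
lemma phib : phi b = Equiv.swap 1 2 := PresentedGroup.toGroup.of hf
lemma phic : phi c = Equiv.swap 1 3 := PresentedGroup.toGroup.of hf

lemma inj : Function.Injective phi := by
  rw [injective_iff_map_eq_one]
  intro g hg1
  rcases key g with rfl|rfl|rfl|rfl|rfl|rfl|rfl|rfl|rfl|rfl|rfl|rfl|rfl|rfl|rfl|rfl|rfl|rfl|rfl|rfl|rfl|rfl|rfl|rfl
  · rfl
  all_goals
    simp only [map_mul, phia, phib, phic] at hg1
  all_goals exact absurd hg1 (by decide)

lemma surj : Function.Surjective phi := by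
  intro σ
  have h1 : Subgroup.closure {τ : Equiv.Perm (Fin 4) | τ.IsSwap} ≤ phi.range := by
    rw [Subgroup.closure_le]
    rintro τ ⟨x, y, hxy, rfl⟩
    fin_cases x <;> fin_cases y <;>
      first
        | exact absurd rfl hxy
        | exact ⟨a, by simp only [map_mul, phia, phib, phic]; decide⟩
        | exact ⟨b, by simp only [map_mul, phia, phib, phic]; decide⟩
        | exact ⟨c, by simp only [map_mul, phia, phib, phic]; decide⟩
        | exact ⟨a * b * a, by simp only [map_mul, phia, phib, phic]; decide⟩
        | exact ⟨a * c * a, by simp only [map_mul, phia, phib, phic]; decide⟩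
        | exact ⟨b * c * b, by simp only [map_mul, phia, phib, phic]; decide⟩
  have h2 : σ ∈ phi.range := h1 (by rw [Equiv.Perm.closure_isSwap]; exact Subgroup.mem_top σ)
  exact h2

end ClusterAux

open ClusterAux in
/-- The assignment t₁ ↦ (1 2), t₂ ↦ (2 3), t₃ ↦ (2 4) extends to a group isomorphism
from the cluster group to the symmetric group Σ₄ (on `Fin 4`, with letters 1,2,3,4
encoded as 0,1,2,3). -/
theorem stmt_11 :
    ∃ π : ClusterGroupA3 ≃* Equiv.Perm (Fin 4),
      π (t 0) = Equiv.swap 0 1 ∧ π (t 1) = Equiv.swap 1 2 ∧ π (t 2) = Equiv.swap 1 3 := by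
  exact ⟨MulEquiv.ofBijective phi ⟨inj, surj⟩, phia, phib, phic⟩
end

section
/- Let G be the cluster group with presentation on generators t₁, t₂, t₃ subject to the relations t₁² = t₂² = t₃² = e, the braid relations t₁t₂t₁ = t₂t₁t₂, t₁t₃t₁ = t₃t₁t₃, t₂t₃t₂ = t₃t₂t₃, and the cycle relations t₁t₂t₃t₁ = t₂t₃t₁t₂ = t₃t₁t₂t₃. Then in G the identity t_i t_j t_i t_k = t_k t_i t_j t_i holds for every choice of pairwise distinct indices i, j, k ∈ {1, 2, 3}. -/
/-!
If `c² = 1`, `a c a = c a c` and `c a b c = a b c a`, then `c` commutes with `a b a`: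
`c a b a = (c a b c) c a = a b c (a c a) = a b (c c) a c = a b a c`.
In the cluster group the cycle relations supply `c a b c = a b c a` whenever `(c, a, b)` is a
cyclic shift of `(t₁, t₂, t₃)`; the other ordering of `i, j` reduces to this one because
`tᵢtⱼtᵢ = tⱼtᵢtⱼ`.
-/

theorem commute_mul_mul_of_cycle {M : Type*} [Monoid M] {a b c : M} (hc : c * c = 1)
    (hac : a * c * a = c * a * c) (hcyc : c * a * b * c = a * b * c * a) :
    Commute (a * b * a) c :=
  calc a * b * a * c = a * b * (c * c) * a * c := by rw [hc, mul_one]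
    _ = a * b * c * (c * a * c) := by simp only [mul_assoc]
    _ = c * a * b * c * c * a := by rw [← hac, hcyc]; simp only [mul_assoc]
    _ = c * (a * b * a) := by rw [mul_assoc (c * a * b), hc, mul_one]; simp only [mul_assoc]

open PresentedGroup

theorem t_mul_self (i : Fin 3) : t i * t i = 1 := by
  rw [← pow_two, t, PresentedGroup.of, ← map_pow]
  fin_cases i <;> exact one_of_mem (by simp [clusterRels])

theorem t_braid {i j : Fin 3} (hij : i ≠ j) : t i * t j * t i = t j * t i * t j := by
  wlog hlt : i < j generalizing i j
  · exact (this hij.symm (lt_of_le_of_ne (not_lt.mp hlt) hij.symm)).symm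
  simp only [t, PresentedGroup.of, ← map_mul]
  apply mk_eq_mk_of_mul_inv_mem
  revert hlt
  fin_cases i <;> fin_cases j <;> simp [clusterRels]

theorem t_cycle (k : Fin 3) :
    t k * t (k + 1) * t (k + 2) * t k = t (k + 1) * t (k + 2) * t k * t (k + 1) := by
  have h₀ : t 0 * t 1 * t 2 * t 0 = t 1 * t 2 * t 0 * t 1 := by
    simp only [t, PresentedGroup.of, ← map_mul]
    exact mk_eq_mk_of_mul_inv_mem (by simp [clusterRels])
  have h₁ : t 1 * t 2 * t 0 * t 1 = t 2 * t 0 * t 1 * t 2 := by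
    simp only [t, PresentedGroup.of, ← map_mul]
    exact mk_eq_mk_of_mul_inv_mem (by simp [clusterRels])
  fin_cases k
  exacts [h₀, h₁, (h₀.trans h₁).symm]

/-- In the cluster group, `tᵢtⱼtᵢt_k = t_k tᵢtⱼtᵢ` for all pairwise distinct `i, j, k`. -/
theorem stmt_12 (i j k : Fin 3) (hij : i ≠ j) (hik : i ≠ k) (hjk : j ≠ k) :
    t i * t j * t i * t k = t k * (t i * t j * t i) := by
  have hk : k + 1 ≠ k := by decide +revert
  obtain ⟨rfl, rfl⟩ | ⟨rfl, rfl⟩ : (i = k + 1 ∧ j = k + 2) ∨ (j = k + 1 ∧ i = k + 2) := by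
    decide +revert
  · exact commute_mul_mul_of_cycle (t_mul_self k) (t_braid hk) (t_cycle k)
  · rw [t_braid hij]
    exact commute_mul_mul_of_cycle (t_mul_self k) (t_braid hk) (t_cycle k)
end

section
/- Let G be the cluster group with presentation on generators t₁, t₂, t₃ subject to the relations t₁² = t₂² = t₃² = e, the braid relations, and the cycle relations, and let I = {t₁, t₂}. Then G_I equals the six-element set {e, t₁, t₂, t₁t₂, t₂t₁, t₁t₂t₁} and G^I equals the six-element set {e, t₃, t₁t₃, t₂t₃, t₁t₂t₃, t₂t₁t₃}. -/
/-- The length of an element of the cluster group: the least `r` such that `w` is a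
product of `r` generators. -/
noncomputable def len (w : ClusterGroupA3) : ℕ :=
  sInf {r : ℕ | ∃ L : List (Fin 3), L.length = r ∧ (L.map t).prod = w}

/-!
Sending `tᵢ` to the transposition `(0 i)` of `{0, 1, 2, 3}` respects the relations, giving a
homomorphism `G → S₄`. The relations show that `{e, t₁, t₂, t₁t₂, t₂t₁, t₁t₂t₁}` is closed
under multiplication, hence is `G_I`, and that `e, t₃, t₃t₁, t₃t₂` represent all right cosets
of `G_I`. So `|G| ≤ 24 = |S₄|`, the homomorphism is an isomorphism and preserves word length,
and `G^I` is read off from the lengths of the permutations in `S₄` with respect to the star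
transpositions `(0 i)`.
-/
open Equiv Function
open scoped Pointwise

section WordLength

variable {ι H : Type*} [Group H]

noncomputable def wordLength (f : ι → H) (h : H) : ℕ :=
  sInf {r | ∃ L : List ι, L.length = r ∧ (L.map f).prod = h}

theorem wordLength_comp_of_injective {G : Type*} [Group G] {φ : G →* H} (hφ : Injective φ)
    (f : ι → G) (g : G) : wordLength (φ ∘ f) (φ g) = wordLength f g := by
  simp only [wordLength, ← List.map_map, ← map_list_prod, hφ.eq_iff]

variable [DecidableEq H] [Fintype ι]

def wordBall (f : ι → H) : ℕ → Finset H
  | 0 => {1}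
  | n + 1 => wordBall f n ∪ Finset.univ.biUnion fun i => (wordBall f n).image (f i * ·)

theorem mem_wordBall {f : ι → H} {h : H} {n : ℕ} :
    h ∈ wordBall f n ↔ ∃ L : List ι, L.length ≤ n ∧ (L.map f).prod = h := by
  induction n generalizing h with
  | zero => simp [wordBall, eq_comm]
  | succ n ih =>
    simp only [wordBall, Finset.mem_union, Finset.mem_biUnion, Finset.mem_univ, true_and,
      Finset.mem_image, ih]
    constructor
    · rintro (⟨L, hL, rfl⟩ | ⟨i, _, ⟨L, hL, rfl⟩, rfl⟩)
      · exact ⟨L, by omega, rfl⟩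
      · exact ⟨i :: L, by simpa using hL, by simp⟩
    · rintro ⟨_ | ⟨i, L⟩, hL, rfl⟩
      · exact Or.inl ⟨[], by simp, rfl⟩
      · exact Or.inr ⟨i, _, ⟨L, by simpa using hL, rfl⟩, by simp⟩

theorem wordLength_le_iff {f : ι → H} {h : H} {N : ℕ} (hN : h ∈ wordBall f N) (n : ℕ) :
    wordLength f h ≤ n ↔ h ∈ wordBall f n := by
  obtain ⟨L, -, hL⟩ := mem_wordBall.mp hN
  have hne : {r | ∃ L : List ι, L.length = r ∧ (L.map f).prod = h}.Nonempty :=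
    ⟨_, L, rfl, hL⟩
  rw [mem_wordBall, wordLength]
  constructor
  · intro hle
    obtain ⟨M, hM, hMh⟩ := Nat.sInf_mem hne
    exact ⟨M, hM ▸ hle, hMh⟩
  · rintro ⟨M, hM, hMh⟩
    exact le_trans (Nat.sInf_le ⟨M, rfl, hMh⟩) hM

theorem wordLength_lt_iff {f : ι → H} {N : ℕ} (hN : ∀ h, h ∈ wordBall f N) (a b : H) :
    wordLength f a < wordLength f b ↔ ∃ n < N, a ∈ wordBall f n ∧ b ∉ wordBall f n := by
  simp only [← wordLength_le_iff (hN a), ← wordLength_le_iff (hN b), not_le]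
  constructor
  · intro hab
    have := (wordLength_le_iff (hN b) N).mpr (hN b)
    exact ⟨wordLength f a, by omega, le_rfl, hab⟩
  · rintro ⟨n, -, ha, hb⟩
    exact ha.trans_lt hb

end WordLength

namespace ClusterGroupA3

theorem t_mul_self (i : Fin 3) : t i * t i = 1 := by
  have hi : FreeGroup.of i ^ 2 ∈ clusterRels := by fin_cases i <;> simp [clusterRels]
  simpa [t, PresentedGroup.of, sq] using PresentedGroup.one_of_mem hi

theorem t_mul_t_mul (i : Fin 3) (g : ClusterGroupA3) : t i * (t i * g) = g := by
  rw [← mul_assoc, t_mul_self, one_mul]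

theorem t_inv (i : Fin 3) : (t i)⁻¹ = t i :=
  inv_eq_of_mul_eq_one_right (t_mul_self i)

theorem braid_01 : t 0 * t 1 * t 0 = t 1 * t 0 * t 1 :=
  PresentedGroup.mk_eq_mk_of_mul_inv_mem (by simp [clusterRels])

theorem braid_02 : t 0 * t 2 * t 0 = t 2 * t 0 * t 2 :=
  PresentedGroup.mk_eq_mk_of_mul_inv_mem (by simp [clusterRels])

theorem braid_12 : t 1 * t 2 * t 1 = t 2 * t 1 * t 2 :=
  PresentedGroup.mk_eq_mk_of_mul_inv_mem (by simp [clusterRels])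

theorem cycle_012 : t 0 * t 1 * t 2 * t 0 = t 1 * t 2 * t 0 * t 1 :=
  PresentedGroup.mk_eq_mk_of_mul_inv_mem (by simp [clusterRels])

theorem cycle_120 : t 1 * t 2 * t 0 * t 1 = t 2 * t 0 * t 1 * t 2 :=
  PresentedGroup.mk_eq_mk_of_mul_inv_mem (by simp [clusterRels])

def starSwap (i : Fin 3) : Perm (Fin 4) := swap 0 i.succ

theorem starSwap_rels : ∀ r ∈ clusterRels, FreeGroup.lift starSwap r = 1 := by
  simp only [clusterRels, Set.mem_insert_iff, Set.mem_singleton_iff]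
  rintro r (rfl | rfl | rfl | rfl | rfl | rfl | rfl | rfl) <;>
    simp only [map_mul, map_pow, map_inv, FreeGroup.lift_apply_of] <;> decide

noncomputable def toPerm : ClusterGroupA3 →* Perm (Fin 4) :=
  PresentedGroup.toGroup starSwap_rels

theorem toPerm_t (i : Fin 3) : toPerm (t i) = starSwap i :=
  PresentedGroup.toGroup.of starSwap_rels

theorem coe_closure_t0_t1 : (Subgroup.closure {t 0, t 1} : Set ClusterGroupA3) =
    {1, t 0, t 1, t 0 * t 1, t 1 * t 0, t 0 * t 1 * t 0} := by
  have braid : t 1 * (t 0 * t 1) = t 0 * (t 1 * t 0) := by simp only [← mul_assoc, braid_01]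
  have mul_t_mem : ∀ x ∈ ({1, t 0, t 1, t 0 * t 1, t 1 * t 0, t 0 * t 1 * t 0} : Set _),
      ∀ y ∈ ({t 0, t 1} : Set ClusterGroupA3),
      x * y ∈ ({1, t 0, t 1, t 0 * t 1, t 1 * t 0, t 0 * t 1 * t 0} : Set _) := by
    simp only [Set.mem_insert_iff, Set.mem_singleton_iff]
    rintro x (rfl | rfl | rfl | rfl | rfl | rfl) y (rfl | rfl) <;>
      simp [mul_assoc, t_mul_self, t_mul_t_mul, braid]
  refine subset_antisymm (fun g hg => ?_) ?_
  · induction hg using Subgroup.closure_induction_right with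
    | one => simp
    | mul_right x _ y hy hx => exact mul_t_mem x hx y hy
    | mul_inv_cancel x _ y hy hx =>
      obtain rfl | rfl := hy <;> exact mul_t_mem x hx _ (by simp [t_inv])
  · have h0 : t 0 ∈ Subgroup.closure {t 0, t 1} := Subgroup.subset_closure (by simp)
    have h1 : t 1 ∈ Subgroup.closure {t 0, t 1} := Subgroup.subset_closure (by simp)
    simp only [Set.insert_subset_iff, Set.singleton_subset_iff, SetLike.mem_coe]
    exact ⟨one_mem _, h0, h1, mul_mem h0 h1, mul_mem h1 h0, mul_mem (mul_mem h0 h1) h0⟩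

theorem t2_t0_t1 : t 2 * t 0 * t 1 = t 0 * t 1 * t 0 * (t 2 * t 0) := by
  have cycle : t 2 * t 0 * t 1 * t 2 = t 0 * t 1 * t 2 * t 0 := (cycle_012.trans cycle_120).symm
  calc t 2 * t 0 * t 1 = t 2 * t 0 * t 1 * t 2 * t 2 := by
        rw [mul_assoc _ (t 2), t_mul_self, mul_one]
    _ = t 0 * t 1 * (t 2 * t 0 * t 2) := by rw [cycle]; simp only [mul_assoc]
    _ = t 0 * t 1 * t 0 * (t 2 * t 0) := by rw [← braid_02]; simp only [mul_assoc]

theorem t2_t1_t0 : t 2 * t 1 * t 0 = t 1 * t 0 * t 1 * (t 2 * t 1) := by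
  have cycle : t 2 * t 1 * t 0 * t 2 = t 1 * t 0 * t 2 * t 1 := by
    simpa only [mul_inv_rev, t_inv, mul_assoc] using congrArg (·⁻¹) cycle_120.symm
  calc t 2 * t 1 * t 0 = t 2 * t 1 * t 0 * t 2 * t 2 := by
        rw [mul_assoc _ (t 2), t_mul_self, mul_one]
    _ = t 1 * t 0 * (t 1 * t 2 * t 1) := by rw [cycle, braid_12]; simp only [mul_assoc]
    _ = t 1 * t 0 * t 1 * (t 2 * t 1) := by simp only [mul_assoc]

def cosetReps : Set ClusterGroupA3 := {1, t 2, t 2 * t 0, t 2 * t 1}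

theorem cosetRep_mul_t : ∀ r ∈ cosetReps, ∀ i,
    ∃ h ∈ Subgroup.closure {t 0, t 1}, ∃ r' ∈ cosetReps, r * t i = h * r' := by
  simp only [cosetReps, ← SetLike.mem_coe, coe_closure_t0_t1, Set.mem_insert_iff,
    Set.mem_singleton_iff]
  rintro r (rfl | rfl | rfl | rfl) i <;> fin_cases i
  exacts [⟨t 0, by simp, 1, by simp, by simp⟩, ⟨t 1, by simp, 1, by simp, by simp⟩,
    ⟨1, by simp, t 2, by simp, by simp⟩, ⟨1, by simp, t 2 * t 0, by simp, by simp⟩,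
    ⟨1, by simp, t 2 * t 1, by simp, by simp⟩,
    ⟨1, by simp, 1, by simp, by simp [t_mul_self]⟩,
    ⟨1, by simp, t 2, by simp, by simp [mul_assoc, t_mul_self]⟩,
    ⟨t 0 * t 1 * t 0, by simp, t 2 * t 0, by simp, t2_t0_t1⟩,
    ⟨t 0, by simp, t 2 * t 0, by simp, by rw [← mul_assoc]; exact braid_02.symm⟩,
    ⟨t 0 * t 1 * t 0, by simp, t 2 * t 1, by simp, by rw [braid_01]; exact t2_t1_t0⟩,
    ⟨1, by simp, t 2, by simp, by simp [mul_assoc, t_mul_self]⟩,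
    ⟨t 1, by simp, t 2 * t 1, by simp, by rw [← mul_assoc]; exact braid_12.symm⟩]

theorem mem_closure_mul_cosetReps (g : ClusterGroupA3) :
    g ∈ (Subgroup.closure {t 0, t 1} : Set ClusterGroupA3) * cosetReps := by
  have mul_t_mem : ∀ x i, x ∈ (Subgroup.closure {t 0, t 1} : Set ClusterGroupA3) * cosetReps →
      x * t i ∈ (Subgroup.closure {t 0, t 1} : Set ClusterGroupA3) * cosetReps := by
    rintro x i ⟨h, hh, r, hr, rfl⟩
    obtain ⟨h', hh', r', hr', e⟩ := cosetRep_mul_t r hr i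
    exact ⟨h * h', mul_mem hh hh', r', hr', by simp only [mul_assoc, e]⟩
  have hg : g ∈ Subgroup.closure (Set.range t) := by
    simp [show Set.range t = Set.range PresentedGroup.of from rfl]
  induction hg using Subgroup.closure_induction_right with
  | one => exact ⟨1, one_mem _, 1, by simp [cosetReps], one_mul 1⟩
  | mul_right x _ y hy hx => obtain ⟨i, rfl⟩ := hy; exact mul_t_mem x i hx
  | mul_inv_cancel x _ y hy hx => obtain ⟨i, rfl⟩ := hy; rw [t_inv]; exact mul_t_mem x i hx

theorem toPerm_injective : Injective toPerm := by
  rw [injective_iff_map_eq_one]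
  intro g hg
  obtain ⟨h, hh, r, hr, rfl⟩ := mem_closure_mul_cosetReps g
  rw [coe_closure_t0_t1] at hh
  simp only [cosetReps, Set.mem_insert_iff, Set.mem_singleton_iff] at hh hr
  -- of the 24 products `h * r`, only `1 * 1` is sent to the identity permutation
  rcases hh with rfl | rfl | rfl | rfl | rfl | rfl <;> rcases hr with rfl | rfl | rfl | rfl <;>
    simp only [map_mul, map_one, toPerm_t] at hg <;> first | exact absurd hg (by decide) | simp

theorem len_eq_wordLength_toPerm (g : ClusterGroupA3) :
    len g = wordLength starSwap (toPerm g) := by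
  show wordLength t g = _
  rw [← wordLength_comp_of_injective toPerm_injective t g, comp_def]
  simp only [toPerm_t]

theorem mem_wordBall_starSwap_four (σ : Perm (Fin 4)) : σ ∈ wordBall starSwap 4 := by
  revert σ
  decide +kernel

theorem setOf_wordLength_lt_starSwap :
    {σ : Perm (Fin 4) | ∀ x ∈ ({0, 1} : Set (Fin 3)),
      wordLength starSwap σ < wordLength starSwap (σ * starSwap x)} =
      {1, starSwap 2, starSwap 0 * starSwap 2, starSwap 1 * starSwap 2,
        starSwap 0 * starSwap 1 * starSwap 2, starSwap 1 * starSwap 0 * starSwap 2} := by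
  ext σ
  simp only [Set.mem_ofPred_eq, Set.mem_insert_iff, Set.mem_singleton_iff, forall_eq_or_imp,
    forall_eq, wordLength_lt_iff mem_wordBall_starSwap_four]
  revert σ
  decide +kernel

end ClusterGroupA3

open ClusterGroupA3 in
/-- For `I = {t₁, t₂}`, the parabolic subgroup `G_I` is
`{e, t₁, t₂, t₁t₂, t₂t₁, t₁t₂t₁}` and
`G^I = {e, t₃, t₁t₃, t₂t₃, t₁t₂t₃, t₂t₁t₃}`. -/
theorem stmt_13 :
    (Subgroup.closure {t 0, t 1} : Set ClusterGroupA3) =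
      {1, t 0, t 1, t 0 * t 1, t 1 * t 0, t 0 * t 1 * t 0} ∧
    {w : ClusterGroupA3 | ∀ x ∈ ({0, 1} : Set (Fin 3)), len w < len (w * t x)} =
      {1, t 2, t 0 * t 2, t 1 * t 2, t 0 * t 1 * t 2, t 1 * t 0 * t 2} := by
  refine ⟨coe_closure_t0_t1, Set.ext fun g => ?_⟩
  rw [Set.mem_ofPred_eq, ← toPerm_injective.mem_set_image]
  simp only [Set.image_insert_eq, Set.image_singleton, map_one, map_mul, toPerm_t,
    ← setOf_wordLength_lt_starSwap, Set.mem_ofPred_eq, len_eq_wordLength_toPerm]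
end
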